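/- Consider the pure sensor-attack setting B_d = 0, B_a = 0, D_d = 0, D_a = I_p (so m = p and y(k) = C x(k) + a(k)). Suppose that for every i ∈ {1,…,p} the system is observable from the single output y_i, i.e., the only v ∈ ℂ^n with C_i A^k v = 0 for all k ∈ {0,…,n−1} is v = 0, where C_i is the i-th row of C. Then for any z0 ∈ ℂ, x0 ∈ ℂ^n and a0 ∈ ℂ^p with a0 ≠ 0 satisfying (A − z0 I) x0 = 0 and C x0 + a0 = 0 (i.e., the exponential attack a(k) = z0^k a0 is undetectable), every entry of a0 is nonzero; in particular ‖a0‖_0 = p, so every undetectable exponential sensor attack must corrupt all p sensors. -/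

import Mathlib

/-!
If `a0 i = 0`, then `C_i x0 = 0` for the eigenvector `x0`, so `C_i A^k x0 = z0^k C_i x0 = 0` for
every `k`; observability from `y_i` forces `x0 = 0`, and then `a0 = -C x0 = 0`.
-/

open Matrix

theorem Matrix.pow_mulVec_of_mulVec_eq_smul {ι R : Type*} [Fintype ι] [DecidableEq ι]
    [CommSemiring R] {A : Matrix ι ι R} {z : R} {x : ι → R} (hx : A *ᵥ x = z • x) (k : ℕ) :
    (A ^ k) *ᵥ x = z ^ k • x := by
  induction k with
  | zero => simp
  | succ k ih =>
    rw [pow_succ', ← mulVec_mulVec, ih, mulVec_smul, hx, smul_smul, pow_succ]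

theorem Matrix.eq_zero_of_mulVec_eq_smul_of_dotProduct_eq_zero {ι R : Type*} [Fintype ι]
    [DecidableEq ι] [CommSemiring R] {A : Matrix ι ι R} {c : ι → R} {N : ℕ}
    (hobs : ∀ v : ι → R, (∀ k < N, c ⬝ᵥ (A ^ k) *ᵥ v = 0) → v = 0)
    {z : R} {x : ι → R} (hx : A *ᵥ x = z • x) (hc : c ⬝ᵥ x = 0) : x = 0 :=
  hobs x fun k _ => by rw [pow_mulVec_of_mulVec_eq_smul hx, dotProduct_smul, hc, smul_zero]

theorem undetectable_sensor_attack_corrupts_all {n p : ℕ}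
    (A : Matrix (Fin n) (Fin n) ℂ) (C : Matrix (Fin p) (Fin n) ℂ)
    (hobs : ∀ i : Fin p, ∀ v : Fin n → ℂ,
      (∀ k < n, C i ⬝ᵥ (A ^ k).mulVec v = 0) → v = 0)
    (z0 : ℂ) (x0 : Fin n → ℂ) (a0 : Fin p → ℂ) (ha0 : a0 ≠ 0)
    (h1 : (A - z0 • (1 : Matrix (Fin n) (Fin n) ℂ)).mulVec x0 = 0)
    (h2 : C.mulVec x0 + a0 = 0) :
    (∀ i, a0 i ≠ 0) ∧ {i : Fin p | a0 i ≠ 0}.ncard = p := by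
  have hAx : A *ᵥ x0 = z0 • x0 := by
    rwa [sub_mulVec, smul_mulVec, one_mulVec, sub_eq_zero] at h1
  have hall : ∀ i, a0 i ≠ 0 := by
    intro i hi
    have hCx : C i ⬝ᵥ x0 = 0 := by simpa [hi, mulVec] using congrFun h2 i
    have hx0 : x0 = 0 := eq_zero_of_mulVec_eq_smul_of_dotProduct_eq_zero (hobs i) hAx hCx
    exact ha0 (by simpa [hx0] using h2)
  refine ⟨hall, ?_⟩
  have hsupp : {i : Fin p | a0 i ≠ 0} = Set.univ := Set.eq_univ_of_forall hall
  rw [hsupp, Set.ncard_univ, Nat.card_fin]
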